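/- arXiv:1611.03759 — 2 statements merged into one kernel-verified Lean document; each statement's English description precedes it below -/
import Mathlib

section
/- Let P be the fibre product of epimorphisms f₁ : G₁ → Q and f₂ : G₂ → Q with Q abelian, and let χ : G₁ × G₂ → ℝ be a group homomorphism (character) vanishing on P but not identically zero. Then the restriction of χ to G₁ × 1 is nonzero and the restriction to 1 × G₂ is nonzero. -/
/-- The fibre product of two homomorphisms onto `Q`. -/
def fibreProduct {G₁ G₂ Q : Type} [Group G₁] [Group G₂] [Group Q]
    (f₁ : G₁ →* Q) (f₂ : G₂ →* Q) : Subgroup (G₁ × G₂) :=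
  MonoidHom.eqLocus (f₁.comp (MonoidHom.fst G₁ G₂)) (f₂.comp (MonoidHom.snd G₁ G₂))

/-- A nonzero character `χ : G₁ × G₂ → ℝ` vanishing on the fibre product `P`
restricts nontrivially both to `G₁ × 1` and to `1 × G₂`. -/
theorem character_nonzero_on_factors {G₁ G₂ Q : Type} [Group G₁] [Group G₂]
    [CommGroup Q] (f₁ : G₁ →* Q) (f₂ : G₂ →* Q)
    (hf₁ : Function.Surjective f₁) (hf₂ : Function.Surjective f₂)
    (χ : G₁ × G₂ → ℝ) (hχ : ∀ x y : G₁ × G₂, χ (x * y) = χ x + χ y)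
    (hP : ∀ p ∈ fibreProduct f₁ f₂, χ p = 0) (hne : χ ≠ 0) :
    (∃ g : G₁, χ (g, (1 : G₂)) ≠ 0) ∧ (∃ h : G₂, χ ((1 : G₁), h) ≠ 0) := by
  have hsplit : ∀ g h, χ (g, h) = χ (g, (1 : G₂)) + χ ((1 : G₁), h) := by
    intro g h
    have := hχ (g, 1) (1, h)
    simpa using this
  constructor
  · by_contra hc
    push_neg at hc
    apply hne
    funext x
    obtain ⟨g, h⟩ := x
    obtain ⟨g', hg'⟩ := hf₁ (f₂ h)
    have hmem : (g', h) ∈ fibreProduct f₁ f₂ := hg'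
    have h0 := hP _ hmem
    rw [hsplit, hc, zero_add] at h0
    show χ (g, h) = 0
    rw [hsplit, hc, zero_add, h0]
  · by_contra hc
    push_neg at hc
    apply hne
    funext x
    obtain ⟨g, h⟩ := x
    obtain ⟨h', hh'⟩ := hf₂ (f₁ g)
    have hmem : (g, h') ∈ fibreProduct f₁ f₂ := hh'.symm
    have h0 := hP _ hmem
    rw [hsplit, hc, add_zero] at h0
    show χ (g, h) = 0
    rw [hsplit, hc, add_zero, h0]
end

section
/- Let A be a finitely generated group and (M_α)_{α ∈ I} a family of ℤA-modules. Then the natural map H₀(A, ∏_{α ∈ I} M_α) → ∏_{α ∈ I} H₀(A, M_α) is an isomorphism, i.e. H₀(A, −) commutes with arbitrary direct products. -/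
/-- The augmentation subgroup `Aug(ℤG)·M` of a `ℤG`-module `M`, generated by the
elements `g•m - m`. -/
def augSubgroup (G : Type) [Group G] (M : Type) [AddCommGroup M]
    [Module (MonoidAlgebra ℤ G) M] : AddSubgroup M :=
  AddSubgroup.closure {x | ∃ (g : G) (m : M), x = MonoidAlgebra.of ℤ G g • m - m}

/-- `H₀(G, M) = M / Aug(ℤG)·M`, the coinvariants of `M`. -/
abbrev H0 (G : Type) [Group G] (M : Type) [AddCommGroup M]
    [Module (MonoidAlgebra ℤ G) M] : Type :=
  M ⧸ augSubgroup G M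

lemma aug_mem_iff_sum (A : Type) [Group A] (M : Type) [AddCommGroup M]
    [Module (MonoidAlgebra ℤ A) M] (T : Finset A)
    (hT : Subgroup.closure (T : Set A) = ⊤) (x : M) :
    x ∈ augSubgroup A M ↔ ∃ f : A → M,
      x = ∑ s ∈ T, (MonoidAlgebra.of ℤ A s • f s - f s) := by
  set P : AddSubgroup M :=
    { carrier := {x | ∃ f : A → M, x = ∑ s ∈ T, (MonoidAlgebra.of ℤ A s • f s - f s)}
      zero_mem' := ⟨0, by simp⟩
      add_mem' := by
        rintro a b ⟨f, rfl⟩ ⟨g, rfl⟩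
        exact ⟨f + g, by rw [← Finset.sum_add_distrib]; congr 1; funext s; simp [smul_add]; abel⟩
      neg_mem' := by
        rintro a ⟨f, rfl⟩
        exact ⟨-f, by
          rw [← Finset.sum_neg_distrib]; congr 1; funext s
          simp only [Pi.neg_apply, smul_neg]; abel⟩ } with hP
  classical
  have key : ∀ g : A, ∀ m : M, MonoidAlgebra.of ℤ A g • m - m ∈ P := by
    intro g
    have hg : g ∈ Subgroup.closure (T : Set A) := hT ▸ Subgroup.mem_top g
    induction hg using Subgroup.closure_induction with
    | mem s hs =>
      intro m
      refine ⟨fun a => if a = s then m else 0, ?_⟩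
      rw [Finset.sum_eq_single_of_mem s hs]
      · simp
      · intro b _ hb; simp [hb]
    | one =>
      intro m
      have h1 : MonoidAlgebra.of ℤ A (1 : A) • m = m := by rw [map_one, one_smul]
      rw [h1, sub_self]
      exact P.zero_mem
    | mul x y hx hy ihx ihy =>
      intro m
      have : MonoidAlgebra.of ℤ A (x * y) • m - m =
          (MonoidAlgebra.of ℤ A x • (MonoidAlgebra.of ℤ A y • m) -
            MonoidAlgebra.of ℤ A y • m) + (MonoidAlgebra.of ℤ A y • m - m) := by
        rw [map_mul, mul_smul]; abel
      rw [this]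
      exact P.add_mem (ihx _) (ihy _)
    | inv x hx ihx =>
      intro m
      have : MonoidAlgebra.of ℤ A x⁻¹ • m - m =
          -(MonoidAlgebra.of ℤ A x • (MonoidAlgebra.of ℤ A x⁻¹ • m) -
            MonoidAlgebra.of ℤ A x⁻¹ • m) := by
        rw [← mul_smul, ← map_mul, mul_inv_cancel, map_one, one_smul]
        abel
      rw [this]
      exact P.neg_mem (ihx _)
  constructor
  · intro hx
    have h1 : augSubgroup A M ≤ P := by
      rw [augSubgroup, AddSubgroup.closure_le]
      rintro y ⟨g, m, rfl⟩
      exact key g m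
    exact h1 hx
  · rintro ⟨f, rfl⟩
    exact AddSubgroup.sum_mem _ fun s _ =>
      AddSubgroup.subset_closure ⟨s, f s, rfl⟩

/-- For a finitely generated group `A`, the functor `H₀(A, −)` commutes with
arbitrary direct products: the natural map
`H₀(A, ∏ M_α) → ∏ H₀(A, M_α)` is an isomorphism. -/
theorem h0_commutes_with_products (A : Type) [Group A] (hA : Group.FG A)
    (I : Type) (M : I → Type) [∀ α, AddCommGroup (M α)]
    [∀ α, Module (MonoidAlgebra ℤ A) (M α)] :
    ∃ e : H0 A (∀ α, M α) ≃+ ∀ α, H0 A (M α),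
      ∀ m : ∀ α, M α,
        e (QuotientAddGroup.mk' (augSubgroup A (∀ α, M α)) m) =
          fun α => QuotientAddGroup.mk' (augSubgroup A (M α)) (m α) := by
  obtain ⟨S, hS, hSfin⟩ := Group.fg_iff.mp hA
  obtain ⟨T, rfl⟩ := hSfin.exists_finset_coe
  -- the componentwise quotient map
  set q : (∀ α, M α) →+ ∀ α, H0 A (M α) :=
    { toFun := fun m α => QuotientAddGroup.mk' (augSubgroup A (M α)) (m α)
      map_zero' := by funext α; simp
      map_add' := by intro a b; funext α; simp } with hq
  have hker : ∀ m : ∀ α, M α, q m = 0 ↔ m ∈ augSubgroup A (∀ α, M α) := by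
    intro m
    rw [aug_mem_iff_sum A _ T hS]
    constructor
    · intro h
      have h' : ∀ α, m α ∈ augSubgroup A (M α) := by
        intro α
        have := congrFun h α
        simpa [hq, QuotientAddGroup.eq_zero_iff] using this
      have h'' : ∀ α, ∃ f : A → M α,
          m α = ∑ s ∈ T, (MonoidAlgebra.of ℤ A s • f s - f s) := fun α =>
        (aug_mem_iff_sum A (M α) T hS (m α)).mp (h' α)
      choose f hf using h''
      refine ⟨fun s α => f α s, ?_⟩
      funext α
      rw [hf α]
      rw [Finset.sum_apply]
      rfl
    · rintro ⟨f, rfl⟩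
      funext α
      have hmem : (∑ s ∈ T, (MonoidAlgebra.of ℤ A s • f s - f s)) α
          ∈ augSubgroup A (M α) := by
        rw [aug_mem_iff_sum A (M α) T hS]
        exact ⟨fun s => f s α, by rw [Finset.sum_apply]; rfl⟩
      show QuotientAddGroup.mk' (augSubgroup A (M α))
        ((∑ s ∈ T, (MonoidAlgebra.of ℤ A s • f s - f s)) α) = 0
      rw [QuotientAddGroup.mk'_apply, QuotientAddGroup.eq_zero_iff]
      exact hmem
  -- descend q to the quotient
  set φ : H0 A (∀ α, M α) →+ ∀ α, H0 A (M α) :=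
    QuotientAddGroup.lift (augSubgroup A (∀ α, M α)) q
      (fun m hm => (hker m).mpr hm) with hφ
  have hφmk : ∀ m : ∀ α, M α,
      φ (QuotientAddGroup.mk' (augSubgroup A (∀ α, M α)) m) = q m := fun m => rfl
  have hbij : Function.Bijective φ := by
    constructor
    · rw [injective_iff_map_eq_zero]
      intro x hx
      induction x using QuotientAddGroup.induction_on with
      | H m =>
        rw [QuotientAddGroup.eq_zero_iff]
        exact (hker m).mp (by rw [← hφmk m]; exact hx)
    · intro y
      refine ⟨QuotientAddGroup.mk' _ (fun α => (y α).out), ?_⟩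
      rw [hφmk]
      funext α
      exact Quotient.out_eq (y α)
  exact ⟨AddEquiv.ofBijective φ hbij, fun m => hφmk m⟩
end
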